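/- Let F and R be as above with p the length of the longest word in F ∪ R, and let A be the adjacency matrix indexed by allowed words of length p-1 with A_{XY} = k(X*Y) if X*Y is an allowed word of length p and 0 otherwise. If τ(n) denotes the number of edge-paths of length n in the multigraph of A (i.e., the sum of entries of A^n), then for every n > p: τ(n-p+1) ≤ |Λ_n| ≤ M·τ(n-p+1), where M = max_{Y ∈ L_p} m(Y)/k(Y). Consequently lim (1/n) ln τ(n) = lim (1/n) ln |Λ_n| whenever either limit exists. -/

import Mathlib

set_option linter.unusedSectionVars false
set_option linter.unnecessarySimpa false
set_option linter.unusedVariables false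

def occ {α : Type*} [DecidableEq α] (w r : List α) : ℕ :=
  ((Finset.range (w.length + 1)).filter fun i => r <+: w.drop i).card

def Allowed {α : Type*} (F : Finset (List α)) (w : List α) : Prop :=
  ∀ a ∈ F, ¬ a <:+: w

instance {α : Type*} [DecidableEq α] (F : Finset (List α)) (w : List α) :
    Decidable (Allowed F w) := by
  unfold Allowed; infer_instance

def mult {α : Type*} [DecidableEq α] (F : Finset (List α)) {ℓ : ℕ}
    (R : Fin ℓ → List α) (m : Fin ℓ → ℕ) (w : List α) : ℕ :=
  if Allowed F w then ∏ j, m j ^ occ w (R j) else 0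

def star {α : Type*} (X Y : List α) : List α := X ++ Y.drop (Y.length - 1)

def kval {α : Type*} [DecidableEq α] (F : Finset (List α)) {ℓ : ℕ}
    (R : Fin ℓ → List α) (m : Fin ℓ → ℕ) (v : List α) : ℕ :=
  mult F R m v / mult F R m v.tail

def lamCard {α : Type*} [DecidableEq α] [Fintype α] (F : Finset (List α)) {ℓ : ℕ}
    (R : Fin ℓ → List α) (m : Fin ℓ → ℕ) (n : ℕ) : ℕ :=
  ∑ f : Fin n → α, mult F R m (List.ofFn f)

section AuxDefs

variable {α : Type*} [DecidableEq α]

/-- product of `m j` over those `j` with `R j` a prefix of `w`. -/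
def kfun {ℓ : ℕ} (R : Fin ℓ → List α) (m : Fin ℓ → ℕ) (w : List α) : ℕ :=
  ∏ j, if R j <+: w then m j else 1

/-- product of `kfun` over all suffixes of `w` longer than `q`. -/
def kk {ℓ : ℕ} (R : Fin ℓ → List α) (m : Fin ℓ → ℕ) (q : ℕ) (w : List α) : ℕ :=
  ∏ i ∈ Finset.range (w.length - q), kfun R m (w.drop i)

variable {F : Finset (List α)} {ℓ : ℕ} {R : Fin ℓ → List α} {m : Fin ℓ → ℕ}

lemma allowed_of_infix {v w : List α} (h : v <:+: w) (hw : Allowed F w) : Allowed F v :=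
  fun a ha hav => hw a ha (hav.trans h)

lemma mult_pos (hm : ∀ j, 1 ≤ m j) {w : List α} (hw : Allowed F w) : 0 < mult F R m w := by
  rw [mult, if_pos hw]
  exact Finset.prod_pos fun j _ => pow_pos (hm j) _

lemma kfun_pos (hm : ∀ j, 1 ≤ m j) (w : List α) : 0 < kfun R m w :=
  Finset.prod_pos fun j _ => by split <;> [exact hm j; exact one_pos]

lemma occ_cons (a : α) (w r : List α) :
    occ (a :: w) r = occ w r + (if r <+: (a :: w) then 1 else 0) := by
  rw [occ, occ, Finset.card_filter, Finset.card_filter]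
  have h : (a :: w).length + 1 = (w.length + 1) + 1 := by simp
  rw [h, Finset.sum_range_succ']
  simp [List.drop_succ_cons]

lemma mult_cons {a : α} {w : List α} (h : Allowed F (a :: w)) :
    mult F R m (a :: w) = kfun R m (a :: w) * mult F R m w := by
  have hw : Allowed F w := allowed_of_infix ((List.suffix_cons a w).isInfix) h
  rw [mult, mult, if_pos h, if_pos hw, kfun, ← Finset.prod_mul_distrib]
  refine Finset.prod_congr rfl fun j _ => ?_
  rw [occ_cons, pow_add]
  by_cases hp : R j <+: (a :: w)
  · simp [hp, mul_comm]
  · simp [hp]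

lemma mult_eq_kfun_mul_tail {w : List α} (h : Allowed F w) (hne : w ≠ []) :
    mult F R m w = kfun R m w * mult F R m w.tail := by
  obtain ⟨a, w', rfl⟩ := List.exists_cons_of_ne_nil hne
  simpa using mult_cons h

lemma kval_eq_kfun (hm : ∀ j, 1 ≤ m j) {w : List α} (h : Allowed F w) (hne : w ≠ []) :
    kval F R m w = kfun R m w := by
  have ht : Allowed F w.tail := allowed_of_infix (List.tail_suffix w).isInfix h
  rw [kval, mult_eq_kfun_mul_tail h hne, Nat.mul_div_cancel _ (mult_pos hm ht)]

lemma prefix_append_iff {r u t : List α} (h : r.length ≤ u.length) :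
    r <+: u ++ t ↔ r <+: u := by
  constructor
  · intro hp
    have h2 : r <+: (u ++ t).take u.length := List.prefix_take_iff.2 ⟨hp, h⟩
    rwa [List.take_left] at h2
  · intro hp
    exact hp.trans (List.prefix_append u t)

lemma kfun_eq_of_take {u t : List α} (h : ∀ j, (R j).length ≤ u.length) :
    kfun R m (u ++ t) = kfun R m u :=
  Finset.prod_congr rfl fun j _ => if_congr (prefix_append_iff (h j)) rfl rfl

lemma infix_cases {a w : List α} (h : a <:+: w) : a <+: w ∨ a <:+: w.drop 1 := by
  obtain ⟨s, t, rfl⟩ := h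
  cases s with
  | nil => left; simpa using List.prefix_append a t
  | cons b s' =>
    right
    refine ⟨s', t, ?_⟩
    simp

lemma allowed_split {p : ℕ} (hFlen : ∀ a ∈ F, a.length ≤ p) {w : List α}
    (hlen : p ≤ w.length) :
    Allowed F w ↔ Allowed F (w.take p) ∧ Allowed F (w.drop 1) := by
  constructor
  · intro h
    exact ⟨allowed_of_infix (List.take_prefix p w).isInfix h,
      allowed_of_infix (List.drop_suffix 1 w).isInfix h⟩
  · rintro ⟨h1, h2⟩ a ha hinf
    rcases infix_cases hinf with hp | hi
    · exact h1 a ha (List.prefix_take_iff.2 ⟨hp, hFlen a ha⟩).isInfix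
    · exact h2 a ha hi

lemma kk_nil_len {q : ℕ} {w : List α} (h : w.length ≤ q) : kk R m q w = 1 := by
  rw [kk, Nat.sub_eq_zero_of_le h, Finset.range_zero, Finset.prod_empty]

lemma kk_cons {q : ℕ} (a : α) {w : List α} (h : q ≤ w.length) :
    kk R m q (a :: w) = kfun R m (a :: w) * kk R m q w := by
  rw [kk, kk]
  have h2 : (a :: w).length - q = (w.length - q) + 1 := by simp; omega
  rw [h2, Finset.prod_range_succ']
  simp [List.drop_succ_cons, mul_comm]

lemma mult_telescope (q : ℕ) :
    ∀ (s : ℕ) (w : List α), Allowed F w → w.length = q + s →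
      mult F R m w = kk R m q w * mult F R m (w.drop s) := by
  intro s
  induction s with
  | zero =>
    intro w hw hlen
    rw [kk_nil_len (by omega), one_mul, List.drop_zero]
  | succ s ih =>
    intro w hw hlen
    have hne : w ≠ [] := by intro h; rw [h] at hlen; simp at hlen
    obtain ⟨a, w', rfl⟩ := List.exists_cons_of_ne_nil hne
    have hw' : Allowed F w' := allowed_of_infix (List.suffix_cons a w').isInfix hw
    have hlen' : w'.length = q + s := by simp at hlen; omega
    rw [mult_cons hw, ih w' hw' hlen', kk_cons a (by omega), List.drop_succ_cons, mul_assoc]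

lemma ofFn_get_cast {n : ℕ} {l : List α} (h : l.length = n) :
    List.ofFn (fun i : Fin n => l.get (Fin.cast h.symm i)) = l := by
  subst h
  simp [List.ofFn_get]

end AuxDefs
section PowEntry

variable {α : Type*} [DecidableEq α] [Fintype α] {F : Finset (List α)} {ℓ : ℕ}
  {R : Fin ℓ → List α} {m : Fin ℓ → ℕ}

lemma pow_entry {q : ℕ} (hq : 1 ≤ q) (hm : ∀ j, 1 ≤ m j)
    (hFlen : ∀ a ∈ F, a.length ≤ q + 1) (hRlen : ∀ j, (R j).length ≤ q + 1)
    (A : Matrix {f : Fin q → α // Allowed F (List.ofFn f)}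
      {f : Fin q → α // Allowed F (List.ofFn f)} ℕ)
    (hA : ∀ X Y, A X Y =
      if (List.ofFn X.1).tail = (List.ofFn Y.1).dropLast ∧
          Allowed F (star (List.ofFn X.1) (List.ofFn Y.1)) then
        kval F R m (star (List.ofFn X.1) (List.ofFn Y.1))
      else 0) :
    ∀ (s : ℕ) (Z Y : {f : Fin q → α // Allowed F (List.ofFn f)}),
      (A ^ s) Z Y = ∑ g : Fin s → α,
        if Allowed F (List.ofFn Z.1 ++ List.ofFn g) ∧
            (List.ofFn Z.1 ++ List.ofFn g).drop s = List.ofFn Y.1 then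
          kk R m q (List.ofFn Z.1 ++ List.ofFn g)
        else 0 := by
  intro s
  induction s with
  | zero =>
    intro Z Y
    rw [pow_zero, Matrix.one_apply]
    rw [Fintype.sum_eq_single (fun i : Fin 0 => i.elim0)
      (fun b hb => absurd (Subsingleton.elim b _) hb)]
    simp only [List.ofFn_zero, List.append_nil, List.drop_zero]
    by_cases hZY : Z = Y
    · rw [if_pos hZY, if_pos ⟨Z.2, by rw [hZY]⟩, kk_nil_len (by simp)]
    · rw [if_neg hZY, if_neg]
      rintro ⟨-, hh⟩
      exact hZY (Subtype.ext (List.ofFn_injective hh))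
  | succ s ih =>
    intro Z Y
    have hzlen : (List.ofFn Z.1).length = q := by simp
    have hzne : (List.ofFn Z.1) ≠ [] := by
      intro h; rw [h] at hzlen; simp at hzlen; omega
    have hztail : (List.ofFn Z.1).tail.length = q - 1 := by simp [hzlen]
    have hvllen : ∀ c : α, ((List.ofFn Z.1).tail ++ [c]).length = q := by
      intro c
      simp only [List.length_append, hztail, List.length_singleton]
      omega
    obtain ⟨vf, hofvf⟩ : ∃ vf : α → (Fin q → α),
        ∀ c, List.ofFn (vf c) = (List.ofFn Z.1).tail ++ [c] :=
      ⟨fun c i => ((List.ofFn Z.1).tail ++ [c]).get (Fin.cast (hvllen c).symm i),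
        fun c => ofFn_get_cast (hvllen c)⟩
    have vf_inj : ∀ c d, vf c = vf d → c = d := by
      intro c d hcd
      have h2 : (List.ofFn Z.1).tail ++ [c] = (List.ofFn Z.1).tail ++ [d] := by
        rw [← hofvf c, ← hofvf d, hcd]
      have h3 := List.append_cancel_left h2
      simpa using h3
    have hstar : ∀ c : α,
        star (List.ofFn Z.1) ((List.ofFn Z.1).tail ++ [c]) = List.ofFn Z.1 ++ [c] := by
      intro c
      have hd : _root_.star (List.ofFn Z.1) ((List.ofFn Z.1).tail ++ [c])
          = List.ofFn Z.1 ++ ((List.ofFn Z.1).tail ++ [c]).drop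
              (((List.ofFn Z.1).tail ++ [c]).length - 1) := rfl
      rw [hd, hvllen c, List.drop_left' hztail]
    have hdropu : ∀ c : α, (List.ofFn Z.1 ++ [c]).drop 1 = (List.ofFn Z.1).tail ++ [c] := by
      obtain ⟨b, z', hbz⟩ := List.exists_cons_of_ne_nil hzne
      intro c; rw [hbz]; simp
    have hAW : ∀ (W : {f : Fin q → α // Allowed F (List.ofFn f)}) (c : α), W.1 = vf c →
        A Z W = if Allowed F (List.ofFn Z.1 ++ [c]) then kfun R m (List.ofFn Z.1 ++ [c]) else 0 := by
      intro W c hW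
      have hWof : List.ofFn W.1 = (List.ofFn Z.1).tail ++ [c] := by rw [hW, hofvf]
      rw [hA, hWof, hstar c, List.dropLast_concat]
      by_cases hu : Allowed F (List.ofFn Z.1 ++ [c])
      · rw [if_pos ⟨rfl, hu⟩, if_pos hu, kval_eq_kfun hm hu (by simp)]
      · rw [if_neg (fun hh => hu hh.2), if_neg hu]
    have hnoc : ∀ W, (¬ ∃ c, W.1 = vf c) → A Z W = 0 := by
      intro W hex
      rw [hA, if_neg]
      rintro ⟨h1, -⟩
      apply hex
      have hWlen : (List.ofFn W.1).length = q := by simp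
      have hWne : List.ofFn W.1 ≠ [] := by intro h; rw [h] at hWlen; simp at hWlen; omega
      refine ⟨(List.ofFn W.1).getLast hWne, ?_⟩
      apply List.ofFn_injective
      rw [hofvf, h1]
      exact (List.dropLast_append_getLast hWne).symm
    have hAs : ∀ (W : {f : Fin q → α // Allowed F (List.ofFn f)}) (c : α), W.1 = vf c →
        (A ^ s) W Y = ∑ g : Fin s → α,
          if Allowed F (((List.ofFn Z.1).tail ++ [c]) ++ List.ofFn g) ∧
              (((List.ofFn Z.1).tail ++ [c]) ++ List.ofFn g).drop s = List.ofFn Y.1 then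
            kk R m q (((List.ofFn Z.1).tail ++ [c]) ++ List.ofFn g)
          else 0 := by
      intro W c hW
      have hWof : List.ofFn W.1 = (List.ofFn Z.1).tail ++ [c] := by rw [hW, hofvf]
      rw [ih W Y]
      simp only [hWof]
    have hconsappend : ∀ (c : α) (t : List α),
        List.ofFn Z.1 ++ (c :: t) = (List.ofFn Z.1 ++ [c]) ++ t := by
      intro c t; simp
    have htake : ∀ (c : α) (t : List α),
        (List.ofFn Z.1 ++ (c :: t)).take (q + 1) = List.ofFn Z.1 ++ [c] := by
      intro c t; rw [hconsappend]; exact List.take_left' (by simp [hzlen])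
    have hdrop1 : ∀ (c : α) (t : List α),
        (List.ofFn Z.1 ++ (c :: t)).drop 1 = ((List.ofFn Z.1).tail ++ [c]) ++ t := by
      obtain ⟨b, z', hbz⟩ := List.exists_cons_of_ne_nil hzne
      intro c t; rw [hbz]; simp
    have hkfun : ∀ (c : α) (t : List α),
        kfun R m (List.ofFn Z.1 ++ (c :: t)) = kfun R m (List.ofFn Z.1 ++ [c]) := by
      intro c t; rw [hconsappend]
      exact kfun_eq_of_take (fun j => by simpa [hzlen] using hRlen j)
    have hallow : ∀ (c : α) (t : List α), Allowed F (List.ofFn Z.1 ++ (c :: t)) ↔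
        (Allowed F (List.ofFn Z.1 ++ [c]) ∧ Allowed F (((List.ofFn Z.1).tail ++ [c]) ++ t)) := by
      intro c t
      rw [allowed_split hFlen
        (by simp only [List.length_append, List.length_cons, hzlen]; omega), htake, hdrop1]
    have hkk2 : ∀ (c : α) (t : List α), kk R m q (List.ofFn Z.1 ++ (c :: t)) =
        kfun R m (List.ofFn Z.1 ++ [c]) * kk R m q (((List.ofFn Z.1).tail ++ [c]) ++ t) := by
      intro c t
      rw [← hkfun c t]
      obtain ⟨b, z', hbz⟩ := List.exists_cons_of_ne_nil hzne
      have hz' : z'.length + 1 = q := by rw [hbz] at hzlen; simpa using hzlen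
      rw [hbz]
      rw [show (b :: z') ++ (c :: t) = b :: (z' ++ (c :: t)) from rfl]
      rw [kk_cons b (by simp; omega)]
      simp [List.append_assoc]
    have hdropS : ∀ (c : α) (t : List α), (List.ofFn Z.1 ++ (c :: t)).drop (s + 1) =
        (((List.ofFn Z.1).tail ++ [c]) ++ t).drop s := by
      intro c t
      rw [← hdrop1 c t, List.drop_drop, Nat.add_comm 1 s]
    have factor : ∀ (c : α) (t : List α),
        (if Allowed F (List.ofFn Z.1 ++ (c :: t)) ∧
            (List.ofFn Z.1 ++ (c :: t)).drop (s + 1) = List.ofFn Y.1 then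
          kk R m q (List.ofFn Z.1 ++ (c :: t)) else 0)
          = (if Allowed F (List.ofFn Z.1 ++ [c]) then kfun R m (List.ofFn Z.1 ++ [c]) else 0) *
            (if Allowed F (((List.ofFn Z.1).tail ++ [c]) ++ t) ∧
                (((List.ofFn Z.1).tail ++ [c]) ++ t).drop s = List.ofFn Y.1 then
              kk R m q (((List.ofFn Z.1).tail ++ [c]) ++ t) else 0) := by
      intro c t
      rw [hdropS c t, hkk2 c t]
      by_cases h1 : Allowed F (List.ofFn Z.1 ++ [c])
      · rw [if_pos h1]
        by_cases h2 : Allowed F (((List.ofFn Z.1).tail ++ [c]) ++ t) ∧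
            (((List.ofFn Z.1).tail ++ [c]) ++ t).drop s = List.ofFn Y.1
        · rw [if_pos h2, if_pos ⟨(hallow c t).2 ⟨h1, h2.1⟩, h2.2⟩]
        · rw [if_neg h2, if_neg, mul_zero]
          rintro ⟨ha, hd⟩
          exact h2 ⟨((hallow c t).1 ha).2, hd⟩
      · rw [if_neg h1, zero_mul, if_neg]
        rintro ⟨ha, -⟩
        exact h1 ((hallow c t).1 ha).1
    have hsplit : (∑ g : Fin (s + 1) → α,
        if Allowed F (List.ofFn Z.1 ++ List.ofFn g) ∧
            (List.ofFn Z.1 ++ List.ofFn g).drop (s + 1) = List.ofFn Y.1 then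
          kk R m q (List.ofFn Z.1 ++ List.ofFn g) else 0)
        = ∑ c : α,
            (if Allowed F (List.ofFn Z.1 ++ [c]) then kfun R m (List.ofFn Z.1 ++ [c]) else 0) *
            ∑ g : Fin s → α,
              (if Allowed F (((List.ofFn Z.1).tail ++ [c]) ++ List.ofFn g) ∧
                  (((List.ofFn Z.1).tail ++ [c]) ++ List.ofFn g).drop s = List.ofFn Y.1 then
                kk R m q (((List.ofFn Z.1).tail ++ [c]) ++ List.ofFn g) else 0) := by
      refine (Fintype.sum_equiv (Fin.consEquiv (fun _ : Fin (s + 1) => α)).symm _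
        (fun x : α × (Fin s → α) =>
          (if Allowed F (List.ofFn Z.1 ++ [x.1]) then kfun R m (List.ofFn Z.1 ++ [x.1]) else 0) *
          (if Allowed F (((List.ofFn Z.1).tail ++ [x.1]) ++ List.ofFn x.2) ∧
              (((List.ofFn Z.1).tail ++ [x.1]) ++ List.ofFn x.2).drop s = List.ofFn Y.1 then
            kk R m q (((List.ofFn Z.1).tail ++ [x.1]) ++ List.ofFn x.2) else 0))
        (fun g => ?_)).trans ?_
      · rw [List.ofFn_succ]
        exact factor (g 0) (List.ofFn fun i => g i.succ)
      · rw [Fintype.sum_prod_type]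
        refine Finset.sum_congr rfl fun c _ => ?_
        dsimp only
        rw [Finset.mul_sum]
    rw [pow_succ', Matrix.mul_apply, hsplit]
    have step1 : ∀ W : {f : Fin q → α // Allowed F (List.ofFn f)},
        A Z W * (A ^ s) W Y = ∑ c : α, if W.1 = vf c then
          (if Allowed F (List.ofFn Z.1 ++ [c]) then kfun R m (List.ofFn Z.1 ++ [c]) else 0) *
          ∑ g : Fin s → α,
            (if Allowed F (((List.ofFn Z.1).tail ++ [c]) ++ List.ofFn g) ∧
                (((List.ofFn Z.1).tail ++ [c]) ++ List.ofFn g).drop s = List.ofFn Y.1 then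
              kk R m q (((List.ofFn Z.1).tail ++ [c]) ++ List.ofFn g) else 0)
          else 0 := by
      intro W
      by_cases hex : ∃ c, W.1 = vf c
      · obtain ⟨c₀, hc₀⟩ := hex
        have hcond : ∀ c : α, (W.1 = vf c) = (c = c₀) := by
          intro c
          apply propext
          constructor
          · intro hc; exact vf_inj c c₀ (hc.symm.trans hc₀)
          · rintro rfl; exact hc₀
        simp only [hcond]
        rw [Fintype.sum_ite_eq']
        rw [hAW W c₀ hc₀, hAs W c₀ hc₀]
      · rw [hnoc W hex, zero_mul]
        exact (Finset.sum_eq_zero fun c _ => if_neg fun hc => hex ⟨c, hc⟩).symm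
    calc (∑ W, A Z W * (A ^ s) W Y)
        = ∑ W : {f : Fin q → α // Allowed F (List.ofFn f)}, ∑ c : α, if W.1 = vf c then
            (if Allowed F (List.ofFn Z.1 ++ [c]) then kfun R m (List.ofFn Z.1 ++ [c]) else 0) *
            ∑ g : Fin s → α,
              (if Allowed F (((List.ofFn Z.1).tail ++ [c]) ++ List.ofFn g) ∧
                  (((List.ofFn Z.1).tail ++ [c]) ++ List.ofFn g).drop s = List.ofFn Y.1 then
                kk R m q (((List.ofFn Z.1).tail ++ [c]) ++ List.ofFn g) else 0)
            else 0 := Finset.sum_congr rfl fun W _ => step1 W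
      _ = ∑ c : α, ∑ W : {f : Fin q → α // Allowed F (List.ofFn f)}, if W.1 = vf c then
            (if Allowed F (List.ofFn Z.1 ++ [c]) then kfun R m (List.ofFn Z.1 ++ [c]) else 0) *
            ∑ g : Fin s → α,
              (if Allowed F (((List.ofFn Z.1).tail ++ [c]) ++ List.ofFn g) ∧
                  (((List.ofFn Z.1).tail ++ [c]) ++ List.ofFn g).drop s = List.ofFn Y.1 then
                kk R m q (((List.ofFn Z.1).tail ++ [c]) ++ List.ofFn g) else 0)
            else 0 := Finset.sum_comm
      _ = ∑ c : α,
            (if Allowed F (List.ofFn Z.1 ++ [c]) then kfun R m (List.ofFn Z.1 ++ [c]) else 0) *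
            ∑ g : Fin s → α,
              (if Allowed F (((List.ofFn Z.1).tail ++ [c]) ++ List.ofFn g) ∧
                  (((List.ofFn Z.1).tail ++ [c]) ++ List.ofFn g).drop s = List.ofFn Y.1 then
                kk R m q (((List.ofFn Z.1).tail ++ [c]) ++ List.ofFn g) else 0) := by
          refine Finset.sum_congr rfl fun c _ => ?_
          by_cases hc : Allowed F (List.ofFn (vf c))
          · have hcond : ∀ W : {f : Fin q → α // Allowed F (List.ofFn f)},
                (W.1 = vf c) = (W = ⟨vf c, hc⟩) := by
              intro W
              apply propext
              constructor
              · intro h; exact Subtype.ext h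
              · intro h; rw [h]
            simp only [hcond]
            exact Fintype.sum_ite_eq' _ _
          · have hE : (if Allowed F (List.ofFn Z.1 ++ [c]) then
                kfun R m (List.ofFn Z.1 ++ [c]) else 0) = 0 := by
              rw [if_neg]
              intro hu
              apply hc
              rw [hofvf]
              have hinf : ((List.ofFn Z.1).tail ++ [c]) <:+: (List.ofFn Z.1 ++ [c]) := by
                rw [← hdropu c]; exact (List.drop_suffix 1 _).isInfix
              exact allowed_of_infix hinf hu
            rw [Finset.sum_eq_zero fun W _ => if_neg fun hW => hc (by rw [← hW]; exact W.2), hE, zero_mul]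

end PowEntry
section LamSplit

variable {α : Type*} [DecidableEq α] [Fintype α]

lemma sum_to_subtype {β : Type*} [Fintype β] {P : β → Prop} [DecidablePred P]
    (G : β → ℕ) (h0 : ∀ a, ¬ P a → G a = 0) :
    ∑ a : β, G a = ∑ Z : {f // P f}, G Z.1 := by
  rw [← Finset.sum_subtype (Finset.univ.filter P) (by simp) G]
  exact (Finset.sum_filter_of_ne fun x _ hx => by_contra fun hP => hx (h0 x hP)).symm

lemma lamCard_split (F : Finset (List α)) {ℓ : ℕ} (R : Fin ℓ → List α) (m : Fin ℓ → ℕ)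
    (q s : ℕ) :
    lamCard F R m (q + s) = ∑ Z : {f : Fin q → α // Allowed F (List.ofFn f)}, ∑ g : Fin s → α,
      if Allowed F (List.ofFn Z.1 ++ List.ofFn g) then
        kk R m q (List.ofFn Z.1 ++ List.ofFn g) *
          mult F R m ((List.ofFn Z.1 ++ List.ofFn g).drop s)
      else 0 := by
  rw [lamCard]
  have e1 : ∑ f : Fin (q + s) → α, mult F R m (List.ofFn f)
      = ∑ x : (Fin q → α) × (Fin s → α), mult F R m (List.ofFn x.1 ++ List.ofFn x.2) := by
    refine (Fintype.sum_equiv (Fin.appendEquiv q s) _ _ fun x => ?_).symm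
    show mult F R m (List.ofFn x.1 ++ List.ofFn x.2)
      = mult F R m (List.ofFn (Fin.append x.1 x.2))
    rw [List.ofFn_fin_append]
  rw [e1, Fintype.sum_prod_type]
  have e2 : ∀ (a : Fin q → α) (b : Fin s → α), mult F R m (List.ofFn a ++ List.ofFn b)
      = if Allowed F (List.ofFn a ++ List.ofFn b) then
          kk R m q (List.ofFn a ++ List.ofFn b) *
            mult F R m ((List.ofFn a ++ List.ofFn b).drop s)
        else 0 := by
    intro a b
    by_cases hw : Allowed F (List.ofFn a ++ List.ofFn b)
    · rw [if_pos hw]; exact mult_telescope q s _ hw (by simp)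
    · rw [if_neg hw, mult, if_neg hw]
  refine Eq.trans (Finset.sum_congr rfl fun a _ => Finset.sum_congr rfl fun b _ => e2 a b) ?_
  refine sum_to_subtype (P := fun f : Fin q → α => Allowed F (List.ofFn f)) _ fun a ha => ?_
  refine Finset.sum_eq_zero fun b _ => if_neg fun hw => ha ?_
  show Allowed F (List.ofFn a)
  have ht : (List.ofFn a ++ List.ofFn b).take q = List.ofFn a := List.take_left' (by simp)
  rw [← ht]
  exact allowed_of_infix (List.take_prefix _ _).isInfix hw

lemma sum_Y_collapse (F : Finset (List α)) (q : ℕ) (d : List α) (hd : d.length = q)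
    (c : Prop) [Decidable c] (hc : c → Allowed F d) (k : ℕ) :
    (∑ Y : {f : Fin q → α // Allowed F (List.ofFn f)},
      if c ∧ d = List.ofFn Y.1 then k else 0) = if c then k else 0 := by
  by_cases h : c
  · have hall : Allowed F (List.ofFn (fun i : Fin q => d.get (Fin.cast hd.symm i))) := by
      rw [ofFn_get_cast hd]; exact hc h
    have hcond : ∀ Y : {f : Fin q → α // Allowed F (List.ofFn f)},
        (c ∧ d = List.ofFn Y.1) = (Y = ⟨_, hall⟩) := by
      intro Y
      apply propext
      constructor
      · rintro ⟨-, hdY⟩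
        apply Subtype.ext
        apply List.ofFn_injective
        rw [ofFn_get_cast hd]
        exact hdY.symm
      · rintro rfl
        exact ⟨h, (ofFn_get_cast hd).symm⟩
    simp only [hcond]
    rw [Fintype.sum_ite_eq', if_pos h]
  · rw [if_neg h]
    exact Finset.sum_eq_zero fun Y _ => if_neg fun hh => h hh.1

end LamSplit

open Filter in
lemma limit_iff (p : ℕ) (hp : 2 ≤ p) (τ Λ : ℕ → ℕ) (M : ℕ)
    (h : ∀ n, p < n → τ (n - p + 1) ≤ Λ n ∧ Λ n ≤ M * τ (n - p + 1)) (L : ℝ) :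
    Tendsto (fun n : ℕ => Real.log (τ n) / n) atTop (nhds L) ↔
      Tendsto (fun n : ℕ => Real.log (Λ n) / n) atTop (nhds L) := by
  have logmono : ∀ a b : ℕ, a ≤ b → Real.log a ≤ Real.log b := by
    intro a b hab
    rcases Nat.eq_zero_or_pos a with rfl | ha
    · simpa using Real.log_natCast_nonneg b
    · exact Real.log_le_log (by exact_mod_cast ha) (by exact_mod_cast hab)
  have divmono : ∀ (a b : ℝ) (n : ℕ), a ≤ b → a / (n : ℝ) ≤ b / (n : ℝ) := by
    intro a b n hab
    rw [div_eq_mul_inv, div_eq_mul_inv]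
    exact mul_le_mul_of_nonneg_right hab (by positivity)
  have cancel : ∀ (a b c : ℝ), b ≠ 0 → a / b * (b / c) = a / c := by
    intro a b c hb
    rw [div_mul_div_comm, mul_comm b c, mul_div_mul_right _ _ hb]
  rcases Nat.eq_zero_or_pos M with rfl | hM1
  · have hτ0 : ∀ k, 2 ≤ k → τ k = 0 := by
      intro k hk
      have h2 := h (k + p - 1) (by omega)
      have e : k + p - 1 - p + 1 = k := by omega
      rw [e] at h2
      omega
    have hΛ0 : ∀ n, p < n → Λ n = 0 := by
      intro n hn; have := h n hn; omega
    have e1 : (fun n : ℕ => Real.log (τ n) / n) =ᶠ[atTop] (fun _ => (0 : ℝ)) := by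
      filter_upwards [eventually_ge_atTop 2] with n hn
      rw [hτ0 n hn]; simp
    have e2 : (fun n : ℕ => Real.log (Λ n) / n) =ᶠ[atTop] (fun _ => (0 : ℝ)) := by
      filter_upwards [eventually_ge_atTop (p + 1)] with n hn
      rw [hΛ0 n (by omega)]; simp
    constructor
    · intro hT
      have hL : L = 0 := tendsto_nhds_unique hT (tendsto_const_nhds.congr' e1.symm)
      subst hL
      exact tendsto_const_nhds.congr' e2.symm
    · intro hT
      have hL : L = 0 := tendsto_nhds_unique hT (tendsto_const_nhds.congr' e2.symm)
      subst hL
      exact tendsto_const_nhds.congr' e1.symm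
  · have hMR : (1 : ℝ) ≤ (M : ℝ) := by exact_mod_cast hM1
    have hlogM : 0 ≤ Real.log M := Real.log_nonneg hMR
    have hub : ∀ n, p < n → Real.log (Λ n) ≤ Real.log M + Real.log (τ (n - p + 1)) := by
      intro n hn
      rcases Nat.eq_zero_or_pos (τ (n - p + 1)) with hτz | hτz
      · have hΛn : Λ n = 0 := by have := (h n hn).2; rw [hτz] at this; simpa using this
        rw [hΛn, hτz]
        simpa using hlogM
      · calc Real.log (Λ n) ≤ Real.log ((M * τ (n - p + 1) : ℕ)) := logmono _ _ (h n hn).2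
          _ = Real.log M + Real.log (τ (n - p + 1)) := by
              push_cast
              exact Real.log_mul (Nat.cast_ne_zero.mpr hM1.ne') (Nat.cast_ne_zero.mpr hτz.ne')
    have hlb : ∀ n, p < n → Real.log (τ (n - p + 1)) ≤ Real.log (Λ n) :=
      fun n hn => logmono _ _ (h n hn).1
    constructor
    · intro hT
      have hc1 : Tendsto (fun n : ℕ => n - p + 1) atTop atTop :=
        (tendsto_add_atTop_nat 1).comp (tendsto_sub_atTop_nat p)
      have hcomp : Tendsto (fun n : ℕ => Real.log (τ (n - p + 1)) / ((n - p + 1 : ℕ) : ℝ))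
          atTop (nhds L) := hT.comp hc1
      have hfrac : Tendsto (fun n : ℕ => ((n - p + 1 : ℕ) : ℝ) / (n : ℝ)) atTop (nhds 1) := by
        have h0 : Tendsto (fun n : ℕ => 1 + ((1 : ℝ) - p) / n) atTop (nhds 1) := by
          simpa using tendsto_const_nhds.add (tendsto_const_div_atTop_nhds_zero_nat ((1 : ℝ) - p))
        refine h0.congr' ?_
        filter_upwards [eventually_ge_atTop (p + 1)] with n hn
        have hn0 : (n : ℝ) ≠ 0 := Nat.cast_ne_zero.mpr (by omega)
        have hcast : ((n - p + 1 : ℕ) : ℝ) = (n : ℝ) - p + 1 := by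
          rw [Nat.cast_add, Nat.cast_sub (by omega), Nat.cast_one]
        rw [hcast]
        field_simp
        ring
      have hshift : Tendsto (fun n : ℕ => Real.log (τ (n - p + 1)) / (n : ℝ)) atTop (nhds L) := by
        have hmul := hcomp.mul hfrac
        rw [mul_one] at hmul
        refine hmul.congr' ?_
        filter_upwards [eventually_ge_atTop (p + 1)] with n hn
        have hne : ((n - p + 1 : ℕ) : ℝ) ≠ 0 := Nat.cast_ne_zero.mpr (by omega)
        exact cancel _ _ _ hne
      refine tendsto_of_tendsto_of_tendsto_of_le_of_le' hshift
        (f := fun n : ℕ => Real.log (Λ n) / n)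
        (h := fun n : ℕ => Real.log M / n + Real.log (τ (n - p + 1)) / n) ?_ ?_ ?_
      · simpa using (tendsto_const_div_atTop_nhds_zero_nat (Real.log M)).add hshift
      · filter_upwards [eventually_gt_atTop p] with n hn
        exact divmono _ _ n (hlb n hn)
      · filter_upwards [eventually_gt_atTop p] with n hn
        calc Real.log (Λ n) / n ≤ (Real.log M + Real.log (τ (n - p + 1))) / n :=
              divmono _ _ n (hub n hn)
          _ = Real.log M / n + Real.log (τ (n - p + 1)) / n := add_div _ _ _
    · intro hT
      have hcomp : Tendsto (fun n : ℕ => Real.log (Λ (n + (p - 1))) / ((n + (p - 1) : ℕ) : ℝ))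
          atTop (nhds L) := hT.comp (tendsto_add_atTop_nat (p - 1))
      have hfrac : Tendsto (fun n : ℕ => ((n + (p - 1) : ℕ) : ℝ) / (n : ℝ)) atTop (nhds 1) := by
        have h0 : Tendsto (fun n : ℕ => 1 + ((p : ℝ) - 1) / n) atTop (nhds 1) := by
          simpa using tendsto_const_nhds.add (tendsto_const_div_atTop_nhds_zero_nat ((p : ℝ) - 1))
        refine h0.congr' ?_
        filter_upwards [eventually_ge_atTop 1] with n hn
        have hn0 : (n : ℝ) ≠ 0 := Nat.cast_ne_zero.mpr (by omega)
        have hcast : ((n + (p - 1) : ℕ) : ℝ) = (n : ℝ) + ((p : ℝ) - 1) := by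
          rw [Nat.cast_add, Nat.cast_sub (by omega), Nat.cast_one]
        rw [hcast]
        field_simp
      have hmain : Tendsto (fun n : ℕ => Real.log (Λ (n + (p - 1))) / (n : ℝ)) atTop (nhds L) := by
        have hmul := hcomp.mul hfrac
        rw [mul_one] at hmul
        refine hmul.congr' ?_
        filter_upwards [eventually_ge_atTop 1] with n hn
        have hne : ((n + (p - 1) : ℕ) : ℝ) ≠ 0 := Nat.cast_ne_zero.mpr (by omega)
        exact cancel _ _ _ hne
      have hkey : ∀ n : ℕ, 2 ≤ n → n + (p - 1) - p + 1 = n := by intro n hn; omega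
      have hgt : ∀ n : ℕ, 2 ≤ n → p < n + (p - 1) := by intro n hn; omega
      refine tendsto_of_tendsto_of_tendsto_of_le_of_le'
        (g := fun n : ℕ => Real.log (Λ (n + (p - 1))) / n - Real.log M / n)
        (f := fun n : ℕ => Real.log (τ n) / n)
        (h := fun n : ℕ => Real.log (Λ (n + (p - 1))) / n) ?_ hmain ?_ ?_
      · simpa using hmain.sub (tendsto_const_div_atTop_nhds_zero_nat (Real.log M))
      · filter_upwards [eventually_ge_atTop 2] with n hn
        have h1 := hub (n + (p - 1)) (hgt n hn)
        rw [hkey n hn] at h1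
        have h2 : Real.log (Λ (n + (p - 1))) - Real.log M ≤ Real.log (τ n) := by linarith
        calc Real.log (Λ (n + (p - 1))) / n - Real.log M / n
            = (Real.log (Λ (n + (p - 1))) - Real.log M) / n := (sub_div _ _ _).symm
          _ ≤ Real.log (τ n) / n := divmono _ _ n h2
      · filter_upwards [eventually_ge_atTop 2] with n hn
        have h1 := hlb (n + (p - 1)) (hgt n hn)
        rw [hkey n hn] at h1
        exact divmono _ _ n h1

/-- Let `A` be the adjacency matrix associated with `F` and `R`, indexed by
allowed words of length `p-1`, with `A X Y = k(X*Y)` if `X*Y` is an allowed word of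
length `p` and `0` otherwise, and let `τ(n)` be the sum of the entries of `A^n`.  Then
for every `n > p` one has `τ(n-p+1) ≤ |Λ_n| ≤ M·τ(n-p+1)` where
`M = max_{Y ∈ L_p} m(Y)/k(Y)`; consequently `lim (1/n) ln τ(n) = lim (1/n) ln |Λ_n|`
whenever either limit exists. -/
theorem tau_le_lam_le_mul_tau {α : Type*} [DecidableEq α] [Fintype α]
    (F : Finset (List α)) {ℓ : ℕ} (R : Fin ℓ → List α) (m : Fin ℓ → ℕ) (p : ℕ)
    (hp : 2 ≤ p)
    (hm : ∀ j, 2 ≤ m j)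
    (hFred : ∀ a ∈ F, ∀ b ∈ F, a ≠ b → ¬ a <:+: b)
    (hRallowed : ∀ j, Allowed F (R j)) (hRne : ∀ j, R j ≠ [])
    (hRred : ∀ j k, j ≠ k → ¬ R j <:+: R k)
    (hFlen : ∀ a ∈ F, a.length ≤ p) (hRlen : ∀ j, (R j).length ≤ p)
    (hirr : ∀ u v : List α, Allowed F u → Allowed F v →
      ∃ t, Allowed F (u ++ t ++ v))
    (A : Matrix {f : Fin (p - 1) → α // Allowed F (List.ofFn f)}
      {f : Fin (p - 1) → α // Allowed F (List.ofFn f)} ℕ)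
    (hA : ∀ X Y, A X Y =
      if (List.ofFn X.1).tail = (List.ofFn Y.1).dropLast ∧
          Allowed F (star (List.ofFn X.1) (List.ofFn Y.1)) then
        kval F R m (star (List.ofFn X.1) (List.ofFn Y.1))
      else 0)
    (τ : ℕ → ℕ) (hτ : ∀ n, τ n = ∑ X, ∑ Y, (A ^ n) X Y)
    (M : ℕ)
    (hM : M = ((Finset.univ : Finset (Fin p → α)).filter
        fun f => Allowed F (List.ofFn f)).sup
      fun f => mult F R m (List.ofFn f) / kval F R m (List.ofFn f)) :
    (∀ n, p < n → τ (n - p + 1) ≤ lamCard F R m n ∧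
        lamCard F R m n ≤ M * τ (n - p + 1)) ∧
      ∀ L : ℝ,
        Filter.Tendsto (fun n : ℕ => Real.log (τ n) / n) Filter.atTop (nhds L) ↔
          Filter.Tendsto (fun n : ℕ => Real.log (lamCard F R m n) / n)
            Filter.atTop (nhds L) := by
  obtain ⟨q, rfl⟩ : ∃ q, p = q + 1 := ⟨p - 1, by omega⟩
  have hq : 1 ≤ q := by omega
  have hm1 : ∀ j, 1 ≤ m j := fun j => le_trans one_le_two (hm j)
  have hPE := pow_entry (F := F) hq hm1 hFlen hRlen A hA
  have hτ2 : ∀ k, τ k = ∑ X : {f : Fin q → α // Allowed F (List.ofFn f)},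
      ∑ Y : {f : Fin q → α // Allowed F (List.ofFn f)}, (A ^ k) X Y := hτ
  have part1 : ∀ n, q + 1 < n → τ (n - (q + 1) + 1) ≤ lamCard F R m n ∧
      lamCard F R m n ≤ M * τ (n - (q + 1) + 1) := by
    intro n hn
    obtain ⟨s, hs2, hn', hgoal⟩ : ∃ s, 2 ≤ s ∧ n = q + s ∧ n - (q + 1) + 1 = s :=
      ⟨n - q, by omega, by omega, by omega⟩
    have htau : τ s = ∑ Z : {f : Fin q → α // Allowed F (List.ofFn f)}, ∑ g : Fin s → α,
        if Allowed F (List.ofFn Z.1 ++ List.ofFn g) then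
          kk R m q (List.ofFn Z.1 ++ List.ofFn g) else 0 := by
      rw [hτ2 s]
      refine Finset.sum_congr rfl fun Z _ => ?_
      refine Eq.trans (Finset.sum_congr rfl fun Y _ => hPE s Z Y) ?_
      rw [Finset.sum_comm]
      refine Finset.sum_congr rfl fun g _ => ?_
      exact sum_Y_collapse F q ((List.ofFn Z.1 ++ List.ofFn g).drop s) (by simp)
        (Allowed F (List.ofFn Z.1 ++ List.ofFn g))
        (fun hw => allowed_of_infix (List.drop_suffix s _).isInfix hw) _
    have hlam := lamCard_split F R m q s
    constructor
    · rw [hgoal, hn', htau, hlam]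
      refine Finset.sum_le_sum fun Z _ => Finset.sum_le_sum fun g _ => ?_
      by_cases hw : Allowed F (List.ofFn Z.1 ++ List.ofFn g)
      · rw [if_pos hw, if_pos hw]
        exact Nat.le_mul_of_pos_right _
          (mult_pos hm1 (allowed_of_infix (List.drop_suffix s _).isInfix hw))
      · rw [if_neg hw, if_neg hw]
    · rw [hgoal, hn', htau, hlam, Finset.mul_sum]
      refine Finset.sum_le_sum fun Z _ => ?_
      rw [Finset.mul_sum]
      refine Finset.sum_le_sum fun g _ => ?_
      by_cases hw : Allowed F (List.ofFn Z.1 ++ List.ofFn g)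
      · rw [if_pos hw, if_pos hw]
        set w := List.ofFn Z.1 ++ List.ofFn g with hwdef
        have hwlen : w.length = q + s := by simp [hwdef]
        have hvlen : (w.drop (s - 1)).length = q + 1 := by
          rw [List.length_drop, hwlen]; omega
        have hvall : Allowed F (w.drop (s - 1)) :=
          allowed_of_infix (List.drop_suffix _ _).isInfix hw
        have hvne : w.drop (s - 1) ≠ [] := by
          intro hh; rw [hh] at hvlen; simp at hvlen
        have htl : (w.drop (s - 1)).tail = w.drop s := by
          rw [List.tail_drop]; congr 1; omega
        set vfn : Fin (q + 1) → α := fun i => (w.drop (s - 1)).get (Fin.cast hvlen.symm i)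
          with hvfn
        have hofv : List.ofFn vfn = w.drop (s - 1) := ofFn_get_cast hvlen
        have hmem : vfn ∈
            Finset.univ.filter (fun f : Fin (q + 1) → α => Allowed F (List.ofFn f)) := by
          rw [Finset.mem_filter]
          exact ⟨Finset.mem_univ _, by rw [hofv]; exact hvall⟩
        have hle : mult F R m (List.ofFn vfn) / kval F R m (List.ofFn vfn) ≤ M := by
          rw [hM]
          exact Finset.le_sup (f := fun f : Fin (q + 1) → α =>
            mult F R m (List.ofFn f) / kval F R m (List.ofFn f)) hmem
        rw [hofv, kval_eq_kfun hm1 hvall hvne,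
          mult_eq_kfun_mul_tail hvall hvne,
          Nat.mul_div_cancel_left _ (kfun_pos hm1 _), htl] at hle
        calc kk R m q w * mult F R m (w.drop s) ≤ kk R m q w * M :=
              Nat.mul_le_mul_left _ hle
          _ = M * kk R m q w := Nat.mul_comm _ _
      · rw [if_neg hw, if_neg hw]; simp
  exact ⟨part1, fun L => limit_iff (q + 1) (by omega) τ (lamCard F R m) M part1 L⟩
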